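/- The map α ↦ α' is an involution on H: for every α ∈ H, (α')' = α. -/

import Mathlib

noncomputable section

open scoped TensorProduct ComplexConjugate InnerProductSpace

open scoped TensorProduct ComplexConjugate InnerProductSpace

variable {H : Type*} [NormedAddCommGroup H] [InnerProductSpace ℂ H] [FiniteDimensional ℂ H]

attribute [-instance] TensorProduct.instInner TensorProduct.instNormedAddCommGroup
  TensorProduct.instInnerProductSpace

namespace TensorIP

variable (H) in
/-- A basis of `H ⊗ H` built from an orthonormal basis of `H`. -/
def tb : Module.Basis (Fin (Module.finrank ℂ H) × Fin (Module.finrank ℂ H)) ℂ (H ⊗[ℂ] H) :=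
  Module.Basis.tensorProduct (stdOrthonormalBasis ℂ H).toBasis (stdOrthonormalBasis ℂ H).toBasis

variable (H) in
/-- The canonical inner product space structure on `H ⊗ H`, which is determined by
`⟪a ⊗ b, c ⊗ d⟫ = ⟪a,c⟫ * ⟪b,d⟫` (see `TensorIP.inner_tmul` below). -/
def core : InnerProductSpace.Core ℂ (H ⊗[ℂ] H) where
  inner x y := ∑ p, conj ((tb H).repr x p) * ((tb H).repr y p)
  conj_inner_symm x y := by
    simp only [map_sum, map_mul, starRingEnd_self_apply]
    exact Finset.sum_congr rfl fun p _ => by ring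
  re_inner_nonneg x := by
    show 0 ≤ RCLike.re (∑ p, conj ((tb H).repr x p) * ((tb H).repr x p))
    have h : ∀ p : Fin (Module.finrank ℂ H) × Fin (Module.finrank ℂ H),
        conj ((tb H).repr x p) * ((tb H).repr x p)
          = ((Complex.normSq ((tb H).repr x p) : ℝ) : ℂ) := fun p => by
      rw [mul_comm, Complex.mul_conj]
    simp only [h]
    rw [map_sum]
    refine Finset.sum_nonneg fun p _ => ?_
    simp [Complex.normSq_nonneg]
  add_left x y z := by
    simp only [map_add, Finsupp.add_apply]
    rw [← Finset.sum_add_distrib]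
    exact Finset.sum_congr rfl fun p _ => by ring
  smul_left x y r := by
    simp only [map_smul, Finsupp.smul_apply, smul_eq_mul, map_mul, Finset.mul_sum]
    exact Finset.sum_congr rfl fun p _ => by ring
  definite x hx := by
    have hx' : ∑ p, conj ((tb H).repr x p) * ((tb H).repr x p) = 0 := hx
    have h2 : ∑ p, ((Complex.normSq ((tb H).repr x p) : ℝ) : ℂ) = 0 := by
      rw [← hx']
      exact Finset.sum_congr rfl fun p _ => by rw [mul_comm, Complex.mul_conj]
    have h3 : ∑ p, Complex.normSq ((tb H).repr x p) = 0 := by exact_mod_cast h2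
    have h4 : ∀ p ∈ Finset.univ, Complex.normSq ((tb H).repr x p) = 0 :=
      (Finset.sum_eq_zero_iff_of_nonneg fun p _ => Complex.normSq_nonneg _).mp h3
    have h5 : (tb H).repr x = 0 := by
      ext p
      exact Complex.normSq_eq_zero.mp (h4 p (Finset.mem_univ p))
    simpa using (tb H).repr.map_eq_zero_iff.mp h5

instance : NormedAddCommGroup (H ⊗[ℂ] H) :=
  @InnerProductSpace.Core.toNormedAddCommGroup ℂ (H ⊗[ℂ] H) _ _ _ (core H)

instance : InnerProductSpace ℂ (H ⊗[ℂ] H) := InnerProductSpace.ofCore (core H).toCore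

theorem inner_tmul (a b c d : H) :
    ⟪a ⊗ₜ[ℂ] b, c ⊗ₜ[ℂ] d⟫_ℂ = ⟪a, c⟫_ℂ * ⟪b, d⟫_ℂ := by
  have key : ∀ (x y : H) (p : Fin (Module.finrank ℂ H) × Fin (Module.finrank ℂ H)),
      (tb H).repr (x ⊗ₜ[ℂ] y) p
        = ⟪(stdOrthonormalBasis ℂ H) p.1, x⟫_ℂ * ⟪(stdOrthonormalBasis ℂ H) p.2, y⟫_ℂ := by
    rintro x y ⟨i, j⟩
    rw [tb, Module.Basis.tensorProduct_repr_tmul_apply, smul_eq_mul,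
      OrthonormalBasis.coe_toBasis_repr_apply, OrthonormalBasis.coe_toBasis_repr_apply,
      OrthonormalBasis.repr_apply_apply, OrthonormalBasis.repr_apply_apply, mul_comm]
  show (∑ p, conj ((tb H).repr (a ⊗ₜ[ℂ] b) p) * ((tb H).repr (c ⊗ₜ[ℂ] d) p)) = _
  simp only [key, map_mul]
  rw [← Finset.univ_product_univ, Finset.sum_product]
  have h : ∀ i j : Fin (Module.finrank ℂ H),
      (conj ⟪(stdOrthonormalBasis ℂ H) i, a⟫_ℂ * conj ⟪(stdOrthonormalBasis ℂ H) j, b⟫_ℂ) *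
        (⟪(stdOrthonormalBasis ℂ H) i, c⟫_ℂ * ⟪(stdOrthonormalBasis ℂ H) j, d⟫_ℂ)
      = (⟪a, (stdOrthonormalBasis ℂ H) i⟫_ℂ * ⟪(stdOrthonormalBasis ℂ H) i, c⟫_ℂ) *
        (⟪b, (stdOrthonormalBasis ℂ H) j⟫_ℂ * ⟪(stdOrthonormalBasis ℂ H) j, d⟫_ℂ) := by
    intro i j
    rw [inner_conj_symm, inner_conj_symm]; ring
  simp only [h]
  rw [← Finset.sum_mul_sum]
  rw [OrthonormalBasis.sum_inner_mul_inner, OrthonormalBasis.sum_inner_mul_inner]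

end TensorIP

/-- `(H, m, u)` is a commutative †-Frobenius monoid: `m` is associative and commutative,
`u 1` is a two-sided unit for `m`, and the Frobenius law
`(m ⊗ id) ∘ (id ⊗ δ) = δ ∘ m` holds, where `δ := m†`. -/
def IsFrobenius (m : H ⊗[ℂ] H →ₗ[ℂ] H) (u : ℂ →ₗ[ℂ] H) : Prop :=
  (m ∘ₗ TensorProduct.map m LinearMap.id
      = m ∘ₗ TensorProduct.map LinearMap.id m ∘ₗ (TensorProduct.assoc ℂ H H H).toLinearMap)
    ∧ (m ∘ₗ (TensorProduct.comm ℂ H H).toLinearMap = m)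
    ∧ (∀ x : H, m (u 1 ⊗ₜ[ℂ] x) = x)
    ∧ (∀ x : H, m (x ⊗ₜ[ℂ] u 1) = x)
    ∧ (TensorProduct.map m LinearMap.id ∘ₗ (TensorProduct.assoc ℂ H H H).symm.toLinearMap
        ∘ₗ TensorProduct.map LinearMap.id (LinearMap.adjoint m)
      = LinearMap.adjoint m ∘ₗ m)

/-- `ψ` is a copyable element: `δ ψ = ψ ⊗ ψ` and `ε ψ = 1`, where `δ := m†`, `ε := u†`. -/
def Copyable (m : H ⊗[ℂ] H →ₗ[ℂ] H) (u : ℂ →ₗ[ℂ] H) (ψ : H) : Prop :=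
  LinearMap.adjoint m ψ = ψ ⊗ₜ[ℂ] ψ ∧ LinearMap.adjoint u ψ = 1

/-- The right action `R_α : H → H`, `x ↦ m (x ⊗ α)`. -/
def rightAction (m : H ⊗[ℂ] H →ₗ[ℂ] H) (α : H) : H →ₗ[ℂ] H :=
  m ∘ₗ (TensorProduct.mk ℂ H H).flip α

/-- The element `α' := (id_H ⊗ α†) (δ (u 1))`, under the identification `H ⊗ ℂ ≃ H`,
where `α† : H → ℂ` is `x ↦ ⟪α, x⟫` and `δ := m†`. -/
def conjElem (m : H ⊗[ℂ] H →ₗ[ℂ] H) (u : ℂ →ₗ[ℂ] H) (α : H) : H :=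
  TensorProduct.rid ℂ H
    ((TensorProduct.map LinearMap.id (innerₛₗ ℂ α)) (LinearMap.adjoint m (u 1)))

theorem TensorIP.inner_rid_map_innerₛₗ (x β : H) (w : H ⊗[ℂ] H) :
    ⟪x, TensorProduct.rid ℂ H (TensorProduct.map LinearMap.id (innerₛₗ ℂ β) w)⟫_ℂ
      = ⟪x ⊗ₜ[ℂ] β, w⟫_ℂ := by
  induction w using TensorProduct.induction_on with
  | zero => simp
  | tmul a b => simp [TensorIP.inner_tmul, mul_comm]
  | add y z hy hz => simp only [map_add, inner_add_right, hy, hz]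

theorem TensorIP.inner_tmul_map_assoc_symm (m : H ⊗[ℂ] H →ₗ[ℂ] H) (x y β : H)
    (w : H ⊗[ℂ] H) :
    ⟪x ⊗ₜ[ℂ] β, TensorProduct.map m LinearMap.id
        ((TensorProduct.assoc ℂ H H H).symm (y ⊗ₜ[ℂ] w))⟫_ℂ
      = ⟪x, m (y ⊗ₜ[ℂ] TensorProduct.rid ℂ H (TensorProduct.map LinearMap.id (innerₛₗ ℂ β) w))⟫_ℂ := by
  induction w using TensorProduct.induction_on with
  | zero => simp
  | tmul a b =>
    simp [TensorIP.inner_tmul, TensorProduct.tmul_smul, mul_comm]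
  | add v w hv hw =>
    simp only [TensorProduct.tmul_add, map_add, inner_add_right, hv, hw]

section Frobenius

variable {m : H ⊗[ℂ] H →ₗ[ℂ] H} {u : ℂ →ₗ[ℂ] H}

theorem inner_conjElem (x β : H) :
    ⟪x, conjElem m u β⟫_ℂ = ⟪m (x ⊗ₜ[ℂ] β), u 1⟫_ℂ := by
  rw [conjElem, TensorIP.inner_rid_map_innerₛₗ, LinearMap.adjoint_inner_right]

/-- The snake identity: apply the Frobenius law to `y ⊗ u 1` and pair with `u 1 ⊗ α`. -/
theorem IsFrobenius.inner_unit_mul_conjElem (hfrob : IsFrobenius m u) (α y : H) :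
    ⟪u 1, m (y ⊗ₜ[ℂ] conjElem m u α)⟫_ℂ = ⟪α, y⟫_ℂ := by
  obtain ⟨-, -, hunit_left, hunit_right, hlaw⟩ := hfrob
  have hδ : TensorProduct.map m LinearMap.id ((TensorProduct.assoc ℂ H H H).symm
      (y ⊗ₜ[ℂ] LinearMap.adjoint m (u 1))) = LinearMap.adjoint m y := by
    simpa [hunit_right] using LinearMap.congr_fun hlaw (y ⊗ₜ[ℂ] u 1)
  calc ⟪u 1, m (y ⊗ₜ[ℂ] conjElem m u α)⟫_ℂ
      = ⟪u 1 ⊗ₜ[ℂ] α, LinearMap.adjoint m y⟫_ℂ := by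
        rw [← hδ, TensorIP.inner_tmul_map_assoc_symm, conjElem]
    _ = ⟪α, y⟫_ℂ := by rw [LinearMap.adjoint_inner_right, hunit_left]

end Frobenius

/-- The map `α ↦ α'` is an involution on `H`. -/
theorem conjElem_involutive (m : H ⊗[ℂ] H →ₗ[ℂ] H) (u : ℂ →ₗ[ℂ] H)
    (hfrob : IsFrobenius m u) (α : H) :
    conjElem m u (conjElem m u α) = α := by
  refine ext_inner_left ℂ fun x => ?_
  rw [inner_conjElem, ← inner_conj_symm, hfrob.inner_unit_mul_conjElem, inner_conj_symm]
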